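/- There exists a constant C > 0 such that for every complex number z with |z| = 1 and Re z > 0, the function h_z(t) = e^{-zt}(1 - e^{-t}) on (0,∞) satisfies ∫₀^∞ (|h_z(t)|² + t² |h_z'(t)|²) dt/t ≤ C (1 + (Re z)^{-2}). -/

import Mathlib

/-!
Since `|z| = 1`, both `|1 - e^{-t}| ≤ t` and `|e^{-t} - z(1 - e^{-t})| ≤ e^{-t} + (1 - e^{-t}) = 1`,
so the integrand is at most `2 t e^{-2 Re z · t}`, whose integral over `(0, ∞)` is
`2 / (2 Re z)² = (Re z)⁻² / 2`.
-/

open MeasureTheory Set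

open scoped Nat in
theorem integral_pow_mul_exp_neg_mul_Ioi (k : ℕ) {c : ℝ} (hc : 0 < c) :
    ∫ t in Ioi (0 : ℝ), t ^ k * Real.exp (-(c * t)) = k ! / c ^ (k + 1) := by
  have key := Real.integral_rpow_mul_exp_neg_mul_Ioi (by positivity : (0 : ℝ) < k + 1) hc
  simp only [add_sub_cancel_right, Real.rpow_natCast, Real.Gamma_nat_eq_factorial] at key
  rw [key, ← Nat.cast_succ, Real.rpow_natCast, one_div, inv_pow, inv_mul_eq_div]

open scoped Nat in
theorem lintegral_pow_mul_exp_neg_mul_Ioi (k : ℕ) {c : ℝ} (hc : 0 < c) :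
    ∫⁻ t in Ioi (0 : ℝ), ENNReal.ofReal (t ^ k * Real.exp (-(c * t))) =
      ENNReal.ofReal (k ! / c ^ (k + 1)) := by
  have hval := integral_pow_mul_exp_neg_mul_Ioi k hc
  rw [← hval, ofReal_integral_eq_lintegral_ofReal]
  · exact .of_integral_ne_zero (by rw [hval]; positivity)
  · filter_upwards [ae_restrict_mem measurableSet_Ioi] with t ht
    exact mul_nonneg (pow_nonneg (le_of_lt ht) _) (Real.exp_nonneg _)

theorem Complex.norm_exp_neg_mul_ofReal (z : ℂ) (t : ℝ) :
    ‖Complex.exp (-z * t)‖ = Real.exp (-(z.re * t)) := by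
  simp [Complex.norm_exp]

theorem Complex.norm_exp_neg_ofReal (t : ℝ) : ‖Complex.exp (-(t : ℂ))‖ = Real.exp (-t) := by
  simpa using Complex.norm_exp_neg_mul_ofReal 1 t

theorem Complex.norm_one_sub_exp_neg_ofReal {t : ℝ} (ht : 0 ≤ t) :
    ‖1 - Complex.exp (-(t : ℂ))‖ = 1 - Real.exp (-t) := by
  rw [← Complex.ofReal_neg, ← Complex.ofReal_exp, ← Complex.ofReal_one, ← Complex.ofReal_sub,
    Complex.norm_real, Real.norm_of_nonneg]
  simpa using ht

-- The paper's `h_z` and its derivative `h_z'`.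
noncomputable def hFun (z : ℂ) (t : ℝ) : ℂ := Complex.exp (-z * t) * (1 - Complex.exp (-(t : ℂ)))

noncomputable def hFunDeriv (z : ℂ) (t : ℝ) : ℂ :=
  Complex.exp (-z * t) * (Complex.exp (-(t : ℂ)) - z * (1 - Complex.exp (-(t : ℂ))))

theorem norm_hFun_le (z : ℂ) {t : ℝ} (ht : 0 ≤ t) :
    ‖hFun z t‖ ≤ Real.exp (-(z.re * t)) * t := by
  rw [hFun, norm_mul, Complex.norm_exp_neg_mul_ofReal, Complex.norm_one_sub_exp_neg_ofReal ht]
  gcongr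
  linarith [Real.one_sub_le_exp_neg t]

theorem norm_hFunDeriv_le {z : ℂ} (hz : ‖z‖ ≤ 1) {t : ℝ} (ht : 0 ≤ t) :
    ‖hFunDeriv z t‖ ≤ Real.exp (-(z.re * t)) := by
  rw [hFunDeriv, norm_mul, Complex.norm_exp_neg_mul_ofReal]
  refine mul_le_of_le_one_right (Real.exp_nonneg _) ?_
  have h₀ : 0 ≤ 1 - Real.exp (-t) := by simpa using ht
  calc ‖Complex.exp (-(t : ℂ)) - z * (1 - Complex.exp (-(t : ℂ)))‖
      ≤ ‖Complex.exp (-(t : ℂ))‖ + ‖z‖ * ‖1 - Complex.exp (-(t : ℂ))‖ :=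
        (norm_sub_le _ _).trans_eq (by rw [norm_mul])
    _ ≤ Real.exp (-t) + 1 * (1 - Real.exp (-t)) := by
        rw [Complex.norm_exp_neg_ofReal, Complex.norm_one_sub_exp_neg_ofReal ht]
        gcongr
    _ = 1 := by ring

theorem hFun_integrand_le {z : ℂ} (hz : ‖z‖ ≤ 1) {t : ℝ} (ht : 0 < t) :
    (‖hFun z t‖ ^ 2 + t ^ 2 * ‖hFunDeriv z t‖ ^ 2) / t ≤
      2 * (t * Real.exp (-(2 * z.re * t))) := by
  have hexp : Real.exp (-(2 * z.re * t)) = Real.exp (-(z.re * t)) ^ 2 := by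
    rw [← Real.exp_nat_mul]; ring_nf
  rw [div_le_iff₀ ht, hexp]
  have hbound := norm_hFun_le z ht.le
  have hbound' := norm_hFunDeriv_le hz ht.le
  calc ‖hFun z t‖ ^ 2 + t ^ 2 * ‖hFunDeriv z t‖ ^ 2
      ≤ (Real.exp (-(z.re * t)) * t) ^ 2 + t ^ 2 * Real.exp (-(z.re * t)) ^ 2 := by gcongr
    _ = 2 * (t * Real.exp (-(z.re * t)) ^ 2) * t := by ring

theorem stmt_11 :
    ∃ C : ℝ, 0 < C ∧ ∀ z : ℂ, ‖z‖ = 1 → 0 < z.re →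
      ∫⁻ t in Ioi (0 : ℝ),
          ENNReal.ofReal
            ((‖(Complex.exp (-z * (t : ℂ)) * (1 - Complex.exp (-(t : ℂ))))‖ ^ 2 +
              t ^ 2 * ‖(Complex.exp (-z * (t : ℂ)) *
                (Complex.exp (-(t : ℂ)) - z * (1 - Complex.exp (-(t : ℂ)))))‖ ^ 2) / t)
        ≤ ENNReal.ofReal (C * (1 + ((z.re)⁻¹) ^ 2)) := by
  refine ⟨1, one_pos, fun z hz hre => ?_⟩
  calc ∫⁻ t in Ioi (0 : ℝ), ENNReal.ofReal ((‖hFun z t‖ ^ 2 + t ^ 2 * ‖hFunDeriv z t‖ ^ 2) / t)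
      ≤ ∫⁻ t in Ioi (0 : ℝ), 2 * ENNReal.ofReal (t * Real.exp (-(2 * z.re * t))) :=
        setLIntegral_mono' measurableSet_Ioi fun t ht => by
          rw [← ENNReal.ofReal_ofNat, ← ENNReal.ofReal_mul zero_le_two]
          exact ENNReal.ofReal_le_ofReal (hFun_integrand_le hz.le ht)
    _ = ENNReal.ofReal (z.re⁻¹ ^ 2 / 2) := by
        have hval := lintegral_pow_mul_exp_neg_mul_Ioi 1 (by positivity : 0 < 2 * z.re)
        simp only [pow_one] at hval
        rw [lintegral_const_mul' _ _ ENNReal.ofNat_ne_top, hval, ← ENNReal.ofReal_ofNat,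
          ← ENNReal.ofReal_mul zero_le_two]
        congr 1
        field_simp
        ring
    _ ≤ ENNReal.ofReal (1 * (1 + z.re⁻¹ ^ 2)) :=
        ENNReal.ofReal_le_ofReal (by nlinarith [sq_nonneg z.re⁻¹])
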